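/- arXiv:1312.3164 — 3 statements merged into one kernel-verified Lean document; each statement's English description precedes it below -/
import Mathlib

section
/- For all integers u ≥ 0, k ≥ 2, n ≥ 3, and m ≥ max{u+1, (k-1)(n-1)}, the determinant satisfies D(m,n,u,k) = D(m+1,n,u,k) - D(m+1,n-1,u,k). -/
/-!
By Pascal's rule, row `i` of the matrix for `m + 1` is row `i` plus row `i + 1` of the matrix
for `m`, except the last row, which is the last row for `m` plus the last unit vector. Splitting
the determinant along the last row, the first summand reduces to the determinant for `m` by row
operations, and the second, expanded along its last row, is the leading principal minor: the
determinant for `m + 1` one size smaller.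
-/

/-- Binomial coefficient `C(a,b)` for integers, with the convention that it is `0` when `b < 0`. -/
def ichoose (a b : ℤ) : ℤ := if 0 ≤ b then (a.toNat.choose b.toNat : ℤ) else 0

/-- The determinant `D(m,n,u,k)` of the `(n-1)×(n-1)` matrix with `(i,j)` entry
`C(m - max{u, (k-1)j}, 1 - i + j)` for `i, j = 1, …, n-1`. -/
def D (m n u k : ℤ) : ℤ :=
  Matrix.det (Matrix.of fun i j : Fin (n - 1).toNat =>
    ichoose (m - max u ((k - 1) * ((j : ℤ) + 1))) (1 - ((i : ℤ) + 1) + ((j : ℤ) + 1)))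

lemma ichoose_zero (a : ℤ) : ichoose a 0 = 1 := by simp [ichoose]

lemma ichoose_of_neg (a : ℤ) {b : ℤ} (hb : b < 0) : ichoose a b = 0 := by
  simp [ichoose, not_le.mpr hb]

lemma ichoose_succ_succ {a : ℤ} (ha : 0 ≤ a) (b : ℤ) :
    ichoose (a + 1) (b + 1) = ichoose a (b + 1) + ichoose a b := by
  rcases lt_trichotomy b (-1) with hb | rfl | hb
  · simp [ichoose_of_neg _ (show b < 0 by omega), ichoose_of_neg _ (show b + 1 < 0 by omega)]
  · simp [ichoose_zero, ichoose_of_neg _ (show (-1 : ℤ) < 0 by omega)]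
  · simp only [ichoose, if_pos (show 0 ≤ b + 1 by omega), if_pos (show 0 ≤ b by omega)]
    rw [show (a + 1).toNat = a.toNat + 1 by omega, show (b + 1).toNat = b.toNat + 1 by omega,
      Nat.choose_succ_succ', Nat.cast_add, add_comm]

namespace Matrix

variable {R : Type*} [CommRing R]

theorem det_eq_of_forall_row_eq_add_smul_succ {n : ℕ} {A B : Matrix (Fin (n + 1)) (Fin (n + 1)) R}
    (c : Fin n → R) (h_last : B (Fin.last n) = A (Fin.last n))
    (h_castSucc : ∀ i : Fin n, B i.castSucc = A i.castSucc + c i • A i.succ) :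
    det B = det A := by
  rw [← det_submatrix_equiv_self Fin.revPerm A, ← det_submatrix_equiv_self Fin.revPerm B]
  refine (det_eq_of_forall_row_eq_smul_add_pred (fun i => -c i.rev) (fun j => ?_)
    (fun i j => ?_)).symm
  · simp [h_last]
  · simp [Fin.rev_succ, Fin.rev_castSucc, h_castSucc]

theorem det_updateRow_last_single {n : ℕ} (M : Matrix (Fin (n + 1)) (Fin (n + 1)) R) :
    det (M.updateRow (Fin.last n) (Pi.single (Fin.last n) 1)) =
      det (M.submatrix Fin.castSucc Fin.castSucc) := by
  rw [← adjugate_apply, adjugate_fin_succ_eq_det_submatrix, Fin.succAbove_last, ← two_mul,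
    pow_mul, neg_one_sq, one_pow, one_mul]

end Matrix

def binomialMatrix (g : ℕ → ℤ) (m : ℤ) (N : ℕ) : Matrix (Fin N) (Fin N) ℤ :=
  Matrix.of fun i j => ichoose (m - g j) ((j : ℤ) - i + 1)

lemma binomialMatrix_succ_row_castSucc {g : ℕ → ℤ} {m : ℤ} {N : ℕ} (hg : ∀ j ≤ N, g j ≤ m)
    (i : Fin N) :
    binomialMatrix g (m + 1) (N + 1) i.castSucc =
      binomialMatrix g m (N + 1) i.castSucc + binomialMatrix g m (N + 1) i.succ := by
  ext j
  have hj := hg j (Nat.lt_succ_iff.mp j.isLt)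
  simp only [binomialMatrix, Matrix.of_apply, Pi.add_apply, Fin.val_castSucc, Fin.val_succ]
  rw [show m + 1 - g j = (m - g j) + 1 by ring, ichoose_succ_succ (by omega)]
  congr 2
  push_cast
  ring

lemma binomialMatrix_succ_row_last {g : ℕ → ℤ} {m : ℤ} {N : ℕ} (hg : ∀ j ≤ N, g j ≤ m) :
    binomialMatrix g (m + 1) (N + 1) (Fin.last N) =
      binomialMatrix g m (N + 1) (Fin.last N) + Pi.single (Fin.last N) 1 := by
  ext j
  have hj := hg j (Nat.lt_succ_iff.mp j.isLt)
  simp only [binomialMatrix, Matrix.of_apply, Pi.add_apply, Fin.val_last]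
  rw [show m + 1 - g j = (m - g j) + 1 by ring, ichoose_succ_succ (by omega)]
  rcases eq_or_ne j (Fin.last N) with rfl | hjN
  · simp [ichoose_zero]
  · have : (j : ℤ) < N := by exact_mod_cast Fin.val_lt_last hjN
    rw [Pi.single_eq_of_ne hjN, ichoose_of_neg _ (show (j : ℤ) - N < 0 by omega)]

lemma binomialMatrix_submatrix_castSucc (g : ℕ → ℤ) (m : ℤ) (N : ℕ) :
    (binomialMatrix g m (N + 1)).submatrix Fin.castSucc Fin.castSucc = binomialMatrix g m N :=
  rfl

theorem det_binomialMatrix_succ {g : ℕ → ℤ} {m : ℤ} {N : ℕ} (hg : ∀ j ≤ N, g j ≤ m) :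
    (binomialMatrix g (m + 1) (N + 1)).det =
      (binomialMatrix g m (N + 1)).det + (binomialMatrix g (m + 1) N).det := by
  rw [← Matrix.updateRow_eq_self (binomialMatrix g (m + 1) (N + 1)) (Fin.last N),
    binomialMatrix_succ_row_last hg, Matrix.det_updateRow_add, Matrix.det_updateRow_last_single,
    binomialMatrix_submatrix_castSucc]
  congr 1
  refine Matrix.det_eq_of_forall_row_eq_add_smul_succ (fun _ => 1) (by simp) fun i => ?_
  rw [Matrix.updateRow_ne (Fin.castSucc_lt_last i).ne, one_smul,
    binomialMatrix_succ_row_castSucc hg]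

theorem D_eq_det_binomialMatrix (m n u k : ℤ) :
    D m n u k = (binomialMatrix (fun j => max u ((k - 1) * (j + 1))) m (n - 1).toNat).det := by
  unfold D binomialMatrix
  congr 2
  ext i j
  congr 1
  ring

theorem det_forward_recurrence_general (m n u k : ℤ) (hk : 2 ≤ k) (hn : 3 ≤ n)
    (hm : max (u + 1) ((k - 1) * (n - 1)) ≤ m) :
    D m n u k = D (m + 1) n u k - D (m + 1) (n - 1) u k := by
  obtain ⟨N, hN, hN'⟩ : ∃ N : ℕ, (n - 1).toNat = N + 1 ∧ (n - 1 - 1).toNat = N :=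
    ⟨(n - 2).toNat, by omega, by omega⟩
  have hg : ∀ j ≤ N, max u ((k - 1) * (j + 1)) ≤ m := fun j hj =>
    max_le (by omega) <| calc
      (k - 1) * (j + 1) ≤ (k - 1) * (n - 1) := by gcongr <;> omega
      _ ≤ m := le_of_max_le_right hm
  rw [D_eq_det_binomialMatrix, D_eq_det_binomialMatrix, D_eq_det_binomialMatrix, hN, hN',
    det_binomialMatrix_succ hg, add_sub_cancel_right]

theorem det_forward_recurrence (m n u k : ℤ) (hu : 0 ≤ u) (hk : 2 ≤ k) (hn : 3 ≤ n)
    (hm : max (u + 1) ((k - 1) * (n - 1)) ≤ m) :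
    D m n u k = D (m + 1) n u k - D (m + 1) (n - 1) u k :=
  det_forward_recurrence_general m n u k hk hn hm
end

section
/- For all integers a, b, m, n, k with k ≥ 1, 0 ≤ b ≤ n, kb ≤ a ≤ m, n ≥ 1 and m ≥ kn, the cardinality |N_{1/k}(a,b;m,n)| equals the sum over i from 0 to ⌊(a-kb)/(k+1)⌋ of (-1)^i · (m+1-kn)/(m+1-k(b+i)) · C(m+n-(k+1)(b+i), n-b-i) · C(a-k(b+i), i), where the equality is of rational numbers. -/
/-- `N_{1/k}(a,b;m,n)`: lattice paths from `(a,b)` to `(m,n)` with unit steps `(1,0)` and `(0,1)`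
(encoded as the list of steps, `true` = `(1,0)`, `false` = `(0,1)`) such that every point `(x,y)`
on the path satisfies `k*y ≤ x`. -/
def N (k a b m n : ℤ) : Set (List Bool) :=
  { s | a + (s.count true : ℤ) = m ∧ b + (s.count false : ℤ) = n ∧
        ∀ t, t <+: s → k * (b + (t.count false : ℤ)) ≤ a + (t.count true : ℤ) }

open Finset

lemma ichoose_natCast_right (x : ℤ) (j : ℕ) : ichoose x j = x.toNat.choose j := by
  simp [ichoose]

lemma ichoose_of_neg_s12 (x : ℤ) {j : ℤ} (hj : j < 0) : ichoose x j = 0 := by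
  simp [ichoose, not_le.2 hj]

@[simp] lemma ichoose_zero_right (x : ℤ) : ichoose x 0 = 1 := by
  simp [ichoose]

lemma ichoose_eq_zero_of_lt {x : ℤ} {j : ℕ} (hj : 0 < j) (hxj : x < j) : ichoose x j = 0 := by
  rw [ichoose_natCast_right, Nat.cast_eq_zero]
  exact Nat.choose_eq_zero_of_lt (by omega)

lemma ichoose_succ_left {x j : ℤ} (h : 0 ≤ x ∨ j ≠ 1) :
    ichoose (x + 1) j = ichoose x j + ichoose x (j - 1) := by
  rcases lt_trichotomy j 0 with hj | rfl | hj
  · simp [ichoose_of_neg_s12 _ hj, ichoose_of_neg_s12 _ (show j - 1 < 0 by omega)]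
  · simp [ichoose_of_neg_s12]
  obtain ⟨i, rfl⟩ : ∃ i : ℕ, j = (i + 1 : ℕ) := ⟨(j - 1).toNat, by omega⟩
  rw [show ((i + 1 : ℕ) : ℤ) - 1 = i by push_cast; ring]
  simp only [ichoose_natCast_right]
  rcases le_or_gt 0 x with hx | hx
  · rw [show (x + 1).toNat = x.toNat + 1 by omega, Nat.choose_succ_succ']
    push_cast; ring
  · have hi : i ≠ 0 := by omega
    simp [show (x + 1).toNat = 0 by omega, show x.toNat = 0 by omega,
      Nat.choose_eq_zero_of_lt (Nat.pos_of_ne_zero hi)]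

/-- `(p - k q) / (p + q) * C(p + q, q)`, written so that it is an integer and obeys Pascal's rule
for all `p ≥ 0` (note `ballot k 0 0 = 1`). For `p ≥ k q` it counts the paths from the origin to
`(p, q)` all of whose points after the first satisfy `k y < x`. -/
def ballot (k p q : ℤ) : ℤ := ichoose (p + q) q - (k + 1) * ichoose (p + q - 1) (q - 1)

@[simp] lemma ballot_zero_right (k p : ℤ) : ballot k p 0 = 1 := by
  simp [ballot, ichoose_of_neg_s12]

lemma ballot_of_neg (k p : ℤ) {q : ℤ} (hq : q < 0) : ballot k p q = 0 := by
  simp [ballot, ichoose_of_neg_s12 _ hq, ichoose_of_neg_s12 _ (show q - 1 < 0 by omega)]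

lemma ballot_mul_self {k q : ℤ} (hk : 0 ≤ k) (hq : 1 ≤ q) : ballot k (k * q) q = 0 := by
  lift k to ℕ using hk
  obtain ⟨j, rfl⟩ : ∃ j : ℕ, q = (j + 1 : ℕ) := ⟨(q - 1).toNat, by omega⟩
  obtain ⟨N, hN⟩ : ∃ N : ℕ, (k + 1) * (j + 1) = N + 1 := ⟨k * (j + 1) + j, by ring⟩
  have hN' : (k : ℤ) * (j + 1 : ℕ) + (j + 1 : ℕ) = ((N + 1 : ℕ) : ℤ) := by
    rw [← hN]; push_cast; ring
  rw [ballot, hN', show ((N + 1 : ℕ) : ℤ) - 1 = N by push_cast; ring,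
    show ((j + 1 : ℕ) : ℤ) - 1 = j by push_cast; ring, ichoose_natCast_right,
    ichoose_natCast_right, Int.toNat_natCast, Int.toNat_natCast, sub_eq_zero]
  have hj : ((j : ℤ) + 1) ≠ 0 := by positivity
  apply mul_right_cancel₀ hj
  have key : (N + 1).choose (j + 1) * (j + 1) = (k + 1) * N.choose j * (j + 1) := by
    rw [← Nat.add_one_mul_choose_eq, ← hN]; ring
  exact_mod_cast key

lemma ballot_pascal (k : ℤ) {p : ℤ} (hp : 0 ≤ p) (q : ℤ) :
    ballot k p q = ballot k (p - 1) q + ballot k p (q - 1) := by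
  have h1 : ichoose (p + q) q = ichoose (p - 1 + q) q + ichoose (p - 1 + q) (q - 1) := by
    rw [← ichoose_succ_left (by omega)]; ring_nf
  have h2 : ichoose (p + q - 1) (q - 1) =
      ichoose (p - 1 + q - 1) (q - 1) + ichoose (p - 1 + q - 1) (q - 1 - 1) := by
    rw [← ichoose_succ_left (by omega)]; ring_nf
  simp only [ballot, h1, h2]
  ring_nf

lemma ballot_eq_div (k : ℤ) {p : ℤ} (hp : 1 ≤ p) (q : ℤ) :
    (ballot k p q : ℚ) = (p - k * q) / p * ichoose (p + q - 1) q := by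
  rcases lt_or_ge q 0 with hq | hq
  · simp [ballot_of_neg _ _ hq, ichoose_of_neg_s12 _ hq]
  obtain ⟨P, rfl⟩ : ∃ P : ℕ, p = P + 1 := ⟨(p - 1).toNat, by omega⟩
  rcases hq.eq_or_lt with rfl | hq
  · field_simp; simp
  obtain ⟨j, rfl⟩ : ∃ j : ℕ, q = (j + 1 : ℕ) := ⟨(q - 1).toNat, by omega⟩
  have pascal := Nat.choose_succ_succ' (P + j + 1) j
  have absorb := Nat.choose_succ_right_eq (P + j + 1) j
  rw [show P + j + 1 - j = P + 1 by omega] at absorb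
  rw [ballot, show (P + 1 : ℤ) + (j + 1 : ℕ) = (P + j + 1 + 1 : ℕ) by push_cast; ring,
    show ((P + j + 1 + 1 : ℕ) : ℤ) - 1 = (P + j + 1 : ℕ) by push_cast; ring,
    show ((j + 1 : ℕ) : ℤ) - 1 = j by push_cast; ring]
  simp only [ichoose_natCast_right, Int.toNat_natCast]
  rw [pascal]
  have hP : (P : ℚ) + 1 ≠ 0 := by positivity
  field_simp
  push_cast
  rw [← Nat.cast_inj (R := ℚ)] at absorb
  push_cast at absorb
  linear_combination (k : ℚ) * absorb

/-- With `p = m + 1 - k b`, `q = n - b` and `x = a - k b` this is the right-hand side of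
`card_N_eq_sum` (see `altBallotSum_eq_sum`). -/
def altBallotSum (k p : ℤ) (q : ℕ) (x : ℤ) : ℤ :=
  ∑ i ∈ range (q + 1), (-1) ^ i * ballot k (p - k * i) (q - i) * ichoose (x - k * i) i

@[simp] lemma altBallotSum_zero (k p x : ℤ) : altBallotSum k p 0 x = 1 := by
  simp [altBallotSum]

lemma altBallotSum_of_le {k x : ℤ} (hk : 0 ≤ k) (hx : x ≤ k) (p : ℤ) (q : ℕ) :
    altBallotSum k p q x = ballot k p q := by
  rw [altBallotSum, sum_range_succ', sum_eq_zero]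
  · simp
  intro i _
  rw [ichoose_eq_zero_of_lt i.succ_pos (by push_cast; nlinarith), mul_zero]

lemma altBallotSum_succ_right {k x : ℤ} (hx : k ≤ x) (p : ℤ) (q : ℕ) :
    altBallotSum k p (q + 1) (x + 1) =
      altBallotSum k p (q + 1) x - altBallotSum k (p - k) q (x - k) := by
  have pascal (i : ℕ) : ichoose (x + 1 - k * i) i =
      ichoose (x - k * i) i + ichoose (x - k * i) (i - 1) := by
    rw [← ichoose_succ_left]
    · ring_nf
    · rcases eq_or_ne i 1 with rfl | hi
      · left; simpa using hx
      · right; exact_mod_cast hi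
  have shift : ∑ i ∈ range (q + 1 + 1),
      (-1) ^ i * ballot k (p - k * i) ((q + 1 : ℕ) - i) * ichoose (x - k * i) (i - 1) =
        -altBallotSum k (p - k) q (x - k) := by
    rw [sum_range_succ', altBallotSum, ← sum_neg_distrib]
    simp only [CharP.cast_eq_zero, zero_sub, ichoose_of_neg_s12 _ neg_one_lt_zero, mul_zero, add_zero]
    refine sum_congr rfl fun i _ => ?_
    push_cast
    ring_nf
  rw [sub_eq_add_neg, ← shift, altBallotSum, altBallotSum, ← sum_add_distrib]
  refine sum_congr rfl fun i _ => ?_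
  rw [pascal]
  ring

lemma altBallotSum_pascal {k p : ℤ} (hk : 0 ≤ k) {q : ℕ} (hp : k * (q + 1) ≤ p + 1) (x : ℤ) :
    altBallotSum k (p + 1) (q + 1) x = altBallotSum k p (q + 1) x + altBallotSum k (p + 1) q x := by
  have pascal : ∀ i ∈ range (q + 1 + 1), ballot k (p + 1 - k * i) ((q + 1 : ℕ) - i) =
      ballot k (p - k * i) ((q + 1 : ℕ) - i) + ballot k (p + 1 - k * i) (q - i) := by
    intro i hi
    have hiq : (i : ℤ) ≤ q + 1 := by rw [mem_range] at hi; omega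
    rw [ballot_pascal k (by nlinarith)]
    push_cast; ring_nf
  rw [altBallotSum, sum_congr rfl fun i hi => by rw [pascal i hi], altBallotSum, altBallotSum]
  simp only [mul_add, add_mul, sum_add_distrib, add_right_inj]
  rw [sum_range_succ, ballot_of_neg _ _ (by push_cast; omega)]
  simp

lemma altBallotSum_mul_self {k : ℤ} (hk : 0 ≤ k) {q : ℕ} (hq : 1 ≤ q) :
    altBallotSum k (k * q) q (k * q) = 0 := by
  refine sum_eq_zero fun i hi => ?_
  rcases Nat.lt_succ_iff_lt_or_eq.1 (mem_range.1 hi) with hi | rfl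
  · rw [show k * q - k * i = k * (q - i : ℤ) by ring, ballot_mul_self hk (by omega)]
    ring
  · rw [sub_self, ichoose_eq_zero_of_lt (by omega) (by simp; omega), mul_zero]

/- Writing `S p q x` for `altBallotSum k p q x`, Pascal's rule in `p` and then in `x` gives
`S (p + 1) (q + 1) (p + 1) = S p (q + 1) p - S (p - k) q (p - k) + S (p + 1) q (p + 1)`,
and the last two terms cancel by induction on `q`. -/
lemma altBallotSum_self_eq_of_le {k : ℤ} (hk : 0 ≤ k) (q : ℕ) {p : ℤ} (hp : k * q ≤ p) :
    altBallotSum k p q p = altBallotSum k (k * q) q (k * q) := by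
  induction q generalizing p with
  | zero => simp
  | succ q ih =>
    induction p, hp using Int.leInduction with
    | base => rfl
    | succ p hp ihp =>
      push_cast at hp
      have hkp : k ≤ p := by nlinarith
      rw [altBallotSum_pascal hk (by linarith), altBallotSum_succ_right hkp,
        ih (p := p - k) (by linarith), ih (p := p + 1) (by linarith), ihp]
      ring

lemma altBallotSum_self_eq_zero {k p : ℤ} (hk : 0 ≤ k) {q : ℕ} (hq : 1 ≤ q) (hp : k * q ≤ p) :
    altBallotSum k p q p = 0 := by
  rw [altBallotSum_self_eq_of_le hk q hp, altBallotSum_mul_self hk hq]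

lemma List.forall_prefix_cons_iff {α : Type*} {P : List α → Prop} {x : α} {s : List α} :
    (∀ t, t <+: x :: s → P t) ↔ P [] ∧ ∀ t, t <+: s → P (x :: t) := by
  constructor
  · intro h
    exact ⟨h [] List.nil_prefix, fun t ht => h _ (List.prefix_cons_iff.2 (.inr ⟨t, rfl, ht⟩))⟩
  · rintro ⟨h_nil, h_cons⟩ t ht
    rcases List.prefix_cons_iff.1 ht with rfl | ⟨t', rfl, ht'⟩
    exacts [h_nil, h_cons t' ht']

section Paths

variable {k a b m n : ℤ}

lemma nil_mem_N : [] ∈ N k a b m n ↔ a = m ∧ b = n ∧ k * b ≤ a := by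
  simp [N]

lemma cons_true_mem_N {s : List Bool} :
    true :: s ∈ N k a b m n ↔ k * b ≤ a ∧ s ∈ N k (a + 1) b m n := by
  simp only [N, Set.mem_ofPred_eq, List.forall_prefix_cons_iff, List.count_cons, List.count_nil,
    BEq.rfl, beq_false, Bool.not_true, Bool.false_eq_true, ↓reduceIte, Nat.cast_add, Nat.cast_one,
    CharP.cast_eq_zero, add_zero, add_comm, add_left_comm]
  tauto

lemma cons_false_mem_N {s : List Bool} :
    false :: s ∈ N k a b m n ↔ k * b ≤ a ∧ s ∈ N k a (b + 1) m n := by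
  simp only [N, Set.mem_ofPred_eq, List.forall_prefix_cons_iff, List.count_cons, List.count_nil,
    BEq.rfl, beq_true, Bool.false_eq_true, ↓reduceIte, Nat.cast_add, Nat.cast_one,
    CharP.cast_eq_zero, add_zero, add_comm, add_left_comm]
  tauto

lemma N_finite (k a b m n : ℤ) : (N k a b m n).Finite := by
  refine (List.finite_length_eq Bool (m - a + (n - b)).toNat).subset fun s ⟨hm, hn, _⟩ => ?_
  have := List.count_true_add_count_false s
  simp only [Set.mem_ofPred_eq]
  omega

lemma N_eq_empty_of_lt_mul (h : a < k * b) : N k a b m n = ∅ :=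
  Set.eq_empty_of_forall_notMem fun _ ⟨_, _, hs⟩ => by
    have := hs [] List.nil_prefix
    simp only [List.count_nil, CharP.cast_eq_zero, add_zero] at this
    omega

lemma N_eq_empty_of_gt_fst (h : m < a) : N k a b m n = ∅ :=
  Set.eq_empty_of_forall_notMem fun _ ⟨hm, _⟩ => by omega

lemma N_eq_empty_of_gt_snd (h : n < b) : N k a b m n = ∅ :=
  Set.eq_empty_of_forall_notMem fun _ ⟨_, hn, _⟩ => by omega

lemma N_self (h : k * n ≤ m) : N k m n m n = {[]} := by
  ext s
  rcases s with _ | ⟨_ | _, s⟩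
  · simpa [nil_mem_N] using h
  · simp only [cons_false_mem_N, Set.mem_singleton_iff, reduceCtorEq, iff_false, not_and]
    exact fun _ => by simp [N_eq_empty_of_gt_snd (lt_add_one n)]
  · simp only [cons_true_mem_N, Set.mem_singleton_iff, reduceCtorEq, iff_false, not_and]
    exact fun _ => by simp [N_eq_empty_of_gt_fst (lt_add_one m)]

lemma N_eq_union (hkb : k * b ≤ a) (hend : ¬(a = m ∧ b = n)) :
    N k a b m n = List.cons true '' N k (a + 1) b m n ∪ List.cons false '' N k a (b + 1) m n := by
  ext s
  rcases s with _ | ⟨_ | _, s⟩ <;> simp [nil_mem_N, cons_true_mem_N, cons_false_mem_N, hkb, hend]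

lemma ncard_N_eq_add (hkb : k * b ≤ a) (hend : ¬(a = m ∧ b = n)) :
    (N k a b m n).ncard = (N k (a + 1) b m n).ncard + (N k a (b + 1) m n).ncard := by
  have disjoint : Disjoint (List.cons true '' N k (a + 1) b m n)
      (List.cons false '' N k a (b + 1) m n) :=
    Set.disjoint_left.2 fun _ ⟨_, _, h⟩ ⟨_, _, h'⟩ => by simp [← h] at h'
  rw [N_eq_union hkb hend, Set.ncard_union_eq disjoint ((N_finite ..).image _)
    ((N_finite ..).image _), Set.ncard_image_of_injective _ List.cons_injective,
    Set.ncard_image_of_injective _ List.cons_injective]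

end Paths

lemma ncard_N_eq_altBallotSum {k m n : ℤ} (hk : 0 ≤ k) (hm : k * n ≤ m) {a b : ℤ}
    (hbn : b ≤ n) (hkb : k * b ≤ a) (ham : a ≤ m) :
    ((N k a b m n).ncard : ℤ) = altBallotSum k (m + 1 - k * b) (n - b).toNat (a - k * b) := by
  by_cases hend : a = m ∧ b = n
  · obtain ⟨rfl, rfl⟩ := hend
    simp [N_self hm]
  have right : ((N k (a + 1) b m n).ncard : ℤ) =
      altBallotSum k (m + 1 - k * b) (n - b).toNat (a - k * b + 1) := by
    rcases ham.lt_or_eq with ham | rfl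
    · rw [ncard_N_eq_altBallotSum hk hm hbn (by linarith) ham]
      ring_nf
    · rw [N_eq_empty_of_gt_fst (lt_add_one a), Set.ncard_empty, Nat.cast_zero, eq_comm,
        show a - k * b + 1 = a + 1 - k * b by ring]
      exact altBallotSum_self_eq_zero hk (by omega) (by rw [Int.toNat_of_nonneg (by omega)]; linarith)
  have up : ((N k a (b + 1) m n).ncard : ℤ) =
      altBallotSum k (m + 1 - k * b) (n - b).toNat (a - k * b) -
        altBallotSum k (m + 1 - k * b) (n - b).toNat (a - k * b + 1) := by
    rcases hbn.lt_or_eq with hbn | rfl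
    · by_cases hkb' : k * (b + 1) ≤ a
      · obtain ⟨q, hq, hq'⟩ : ∃ q : ℕ, (n - b).toNat = q + 1 ∧ (n - (b + 1)).toNat = q :=
          ⟨(n - (b + 1)).toNat, by omega, rfl⟩
        rw [ncard_N_eq_altBallotSum hk hm hbn hkb' ham, hq, hq',
          altBallotSum_succ_right (by linarith)]
        ring_nf
      · rw [N_eq_empty_of_lt_mul (by linarith), altBallotSum_of_le hk (by linarith),
          altBallotSum_of_le hk (by linarith)]
        simp
    · simp [N_eq_empty_of_gt_snd (lt_add_one b)]
  rw [ncard_N_eq_add hkb hend]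
  push_cast
  rw [right, up]
  ring
termination_by (m - a + (n - b)).toNat

lemma altBallotSum_eq_sum {k p x : ℤ} (hxp : x < p) (hx : 0 ≤ x) (q : ℕ) {M : ℕ} (hM : q < M) :
    (altBallotSum k p q x : ℚ) = ∑ i ∈ range M, (-1) ^ i * (p - k * q) / (p - k * i) *
      (ichoose (p + q - 1 - (k + 1) * i) (q - i) : ℚ) * ichoose (x - k * i) i := by
  have vanish : ∀ i ≥ q + 1, (-1) ^ i * ballot k (p - k * i) (q - i) * ichoose (x - k * i) i = 0 :=
    fun i hi => by rw [ballot_of_neg _ _ (by omega), mul_zero, zero_mul]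
  rw [altBallotSum, ← eventually_constant_sum vanish hM, Int.cast_sum]
  refine sum_congr rfl fun i _ => ?_
  by_cases hz : ichoose (x - k * i) i = 0
  · simp [hz]
  have hki : k * i ≤ x := by
    by_contra! h
    rcases i.eq_zero_or_pos with rfl | hi
    · rw [Nat.cast_zero, mul_zero] at h; omega
    · exact hz (ichoose_eq_zero_of_lt hi (by linarith))
  push_cast
  rw [ballot_eq_div k (by linarith), show p - k * i + (q - i) - 1 = p + q - 1 - (k + 1) * i by ring]
  push_cast
  ring

theorem card_N_eq_sum_general (a b m n k : ℤ) (hk : 1 ≤ k) (hbn : b ≤ n)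
    (hkb : k * b ≤ a) (ham : a ≤ m) (hm : k * n ≤ m) :
    ((N k a b m n).ncard : ℚ) =
      ∑ i ∈ Finset.range ((⌊((a : ℚ) - (k : ℚ) * (b : ℚ)) / ((k : ℚ) + 1)⌋).toNat + 1),
        (-1 : ℚ) ^ i * ((m : ℚ) + 1 - (k : ℚ) * (n : ℚ)) /
            ((m : ℚ) + 1 - (k : ℚ) * ((b : ℚ) + (i : ℚ))) *
          (ichoose (m + n - (k + 1) * (b + (i : ℤ))) (n - b - (i : ℤ)) : ℚ) *
          (ichoose (a - k * (b + (i : ℤ))) (i : ℤ) : ℚ) := by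
  obtain ⟨q, rfl⟩ : ∃ q : ℕ, n = b + q := ⟨(n - b).toNat, by omega⟩
  set R := (⌊((a : ℚ) - k * b) / (k + 1)⌋).toNat + 1
  have hR (i : ℕ) (hi : R ≤ i) : ichoose (a - k * b - k * i) i = 0 := by
    have h : ⌊((a : ℚ) - k * b) / (k + 1)⌋ < i := by
      have := Int.self_le_toNat ⌊((a : ℚ) - k * b) / (k + 1)⌋
      omega
    rw [Int.floor_lt, div_lt_iff₀ (by positivity)] at h
    have h' : a - k * b < i * (k + 1) := by exact_mod_cast h
    exact ichoose_eq_zero_of_lt (by omega) (by linarith)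
  rw [← Int.cast_natCast, ncard_N_eq_altBallotSum (by linarith) hm hbn hkb ham,
    show (b + q - b).toNat = q by omega,
    altBallotSum_eq_sum (by linarith) (by linarith) q (M := R + q + 1) (by omega),
    eventually_constant_sum (N := R) (fun i hi => by simp [hR i hi]) (by omega)]
  refine sum_congr rfl fun i _ => ?_
  push_cast
  ring_nf

theorem card_N_eq_sum (a b m n k : ℤ) (hk : 1 ≤ k) (hb : 0 ≤ b) (hbn : b ≤ n)
    (hkb : k * b ≤ a) (ham : a ≤ m) (hn : 1 ≤ n) (hm : k * n ≤ m) :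
    ((N k a b m n).ncard : ℚ) =
      ∑ i ∈ Finset.range ((⌊((a : ℚ) - (k : ℚ) * (b : ℚ)) / ((k : ℚ) + 1)⌋).toNat + 1),
        (-1 : ℚ) ^ i * ((m : ℚ) + 1 - (k : ℚ) * (n : ℚ)) /
            ((m : ℚ) + 1 - (k : ℚ) * ((b : ℚ) + (i : ℚ))) *
          (ichoose (m + n - (k + 1) * (b + (i : ℤ))) (n - b - (i : ℤ)) : ℚ) *
          (ichoose (a - k * (b + (i : ℤ))) (i : ℤ) : ℚ) :=
  card_N_eq_sum_general a b m n k hk hbn hkb ham hm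
end

section
/- For all integers n, k with n ≥ 1 and k ≥ 2, the determinant D((k-1)n+1, n+1, 0, k) equals the Fuss–Catalan number 1/((k-1)n+1) · C(kn, n), where the equality is of rational numbers. -/
open Finset Matrix fwdDiff

theorem fwdDiff_choose_succ_eq_sum (K d : ℕ) :
    Δ_[K] (fun x : ℕ ↦ (x.choose (d + 1) : ℤ)) =
      fun x ↦ ∑ s ∈ range K, ((x + s).choose d : ℤ) := by
  ext x
  have telescope := sum_range_sub (fun s ↦ ((x + s).choose (d + 1) : ℤ)) K
  rw [add_zero] at telescope
  rw [fwdDiff, ← telescope]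
  refine sum_congr rfl fun s _ ↦ ?_
  rw [← add_assoc, Nat.choose_succ_succ', Nat.cast_add]
  ring

theorem fwdDiff_iter_choose_eq_pow (K d : ℕ) :
    (Δ_[K])^[d] (fun x : ℕ ↦ (x.choose d : ℤ)) = fun _ ↦ (K : ℤ) ^ d := by
  induction d with
  | zero => simp
  | succ d ih =>
    ext x
    rw [Function.iterate_succ_apply, fwdDiff_choose_succ_eq_sum, ← sum_fn,
      fwdDiff_iter_finsetSum, Finset.sum_apply,
      sum_congr rfl fun s _ ↦ fwdDiff_iter_comp_add K (fun x : ℕ ↦ (x.choose d : ℤ)) s d x,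
      ih]
    simp [pow_succ']

theorem alternating_sum_choose_mul_choose_mul_add (K c d : ℕ) :
    ∑ l ∈ range (d + 1), (-1) ^ l * (d.choose l : ℤ) * ((K * l + c).choose d : ℤ) =
      (-1) ^ d * (K : ℤ) ^ d := by
  have h := fwdDiff_iter_eq_sum_shift K (fun x : ℕ ↦ (x.choose d : ℤ)) d c
  rw [fwdDiff_iter_choose_eq_pow] at h
  beta_reduce at h
  rw [h, mul_sum]
  refine sum_congr rfl fun l hl ↦ ?_
  have hsign : (-1 : ℤ) ^ d * (-1) ^ (d - l) = (-1) ^ l := by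
    rw [← pow_add, show d + (d - l) = l + 2 * (d - l) by grind, pow_add, pow_mul]
    simp
  rw [smul_eq_mul, smul_eq_mul, add_comm c, mul_comm l K]
  linear_combination -(d.choose l : ℤ) * ((K * l + c).choose d : ℤ) * hsign

theorem alternating_sum_choose_mul_choose_succ_mul_add (p c m : ℕ) :
    ∑ j ∈ range (m + 1),
        (-1) ^ j * ((p * j + c).choose (m - j) : ℤ) * (((p + 1) * j + c).choose j : ℤ) =
      (-1) ^ m * ((p : ℤ) + 1) ^ m := by
  have h := alternating_sum_choose_mul_choose_mul_add (p + 1) c m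
  push_cast at h
  rw [← h]
  refine sum_congr rfl fun j hj ↦ ?_
  have hsub : (p + 1) * j + c - j = p * j + c := Nat.sub_eq_of_eq_add (by ring)
  have htri := Nat.choose_mul (n := (p + 1) * j + c) (mem_range_succ_iff.mp hj)
  rw [hsub] at htri
  have htri' := congrArg (Nat.cast : ℕ → ℤ) htri
  push_cast at htri'
  linear_combination (-1) ^ j * htri'.symm

/-- Division-free form of `C(K n, n) / ((K - 1) n + 1)`, see `mul_fussCatalan`. -/
def fussCatalan (K n : ℕ) : ℤ := K * (K * n).choose n - ((K : ℤ) - 1) * (K * n + 1).choose n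

theorem alternating_sum_choose_mul_fussCatalan (p m : ℕ) :
    ∑ j ∈ range (m + 2),
      (-1) ^ j * ((p * j + 1).choose (m + 1 - j) : ℤ) * fussCatalan (p + 1) j = 0 := by
  have hA := alternating_sum_choose_mul_choose_succ_mul_add p 1 (m + 1)
  -- The bracket is `C((p+1) j, j - 1)`, zero at `j = 0`; shifting `j` gives the case `c = p + 1`.
  have hB : ∑ j ∈ range (m + 2), (-1) ^ j * ((p * j + 1).choose (m + 1 - j) : ℤ) *
      ((((p + 1) * j + 1).choose j : ℤ) - ((p + 1) * j).choose j) =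
        -((-1) ^ m * ((p : ℤ) + 1) ^ m) := by
    rw [sum_range_succ', ← alternating_sum_choose_mul_choose_succ_mul_add p (p + 1) m,
      ← sum_neg_distrib]
    simp only [mul_zero, Nat.choose_zero_right, sub_self, add_zero]
    refine sum_congr rfl fun j _ ↦ ?_
    have hpascal := Nat.choose_succ_succ' ((p + 1) * (j + 1)) j
    rw [Nat.add_sub_add_right]
    push_cast [hpascal]
    rw [show p * (j + 1) + 1 = p * j + (p + 1) by ring,
      show (p + 1) * (j + 1) = (p + 1) * j + (p + 1) by ring]
    ring
  have hF (j : ℕ) : fussCatalan (p + 1) j = (((p + 1) * j + 1).choose j : ℤ) -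
      ((p : ℤ) + 1) * ((((p + 1) * j + 1).choose j : ℤ) - ((p + 1) * j).choose j) := by
    simp only [fussCatalan]
    push_cast
    ring
  rw [sum_congr rfl fun j _ ↦ by rw [hF, mul_sub, mul_left_comm _ ((p : ℤ) + 1)],
    sum_sub_distrib, ← mul_sum, hA, hB]
  ring

theorem mul_fussCatalan (p n : ℕ) :
    ((p : ℤ) * n + 1) * fussCatalan (p + 1) n = ((p + 1) * n).choose n := by
  have h := Nat.choose_mul_succ_eq ((p + 1) * n) n
  rw [show (p + 1) * n + 1 - n = p * n + 1 from Nat.sub_eq_of_eq_add (by ring)] at h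
  have h' := congrArg (Nat.cast : ℕ → ℤ) h
  push_cast at h'
  simp only [fussCatalan]
  push_cast
  linear_combination (p : ℤ) * h'

theorem Matrix.det_eq_of_mulVec_eq_single_last {R : Type*} [CommRing R] {N : ℕ}
    {M : Matrix (Fin (N + 1)) (Fin (N + 1)) R}
    (hzero : ∀ i j : Fin N, i < j → M i.castSucc j.succ = 0)
    (hsuper : ∀ i : Fin N, M i.castSucc i.succ = 1)
    {s : Fin (N + 1) → R} (hs : s 0 = 1) {c : R} (hMs : M *ᵥ s = Pi.single (Fin.last N) c) :
    M.det = (-1) ^ N * c := by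
  have h := det_updateCol_sum M 0 s
  rw [hs, one_smul] at h
  have hcol : (fun k ↦ ∑ i, s i • M k i) = Pi.single (Fin.last N) c := by
    rw [← hMs]
    ext k
    simp [mulVec, dotProduct, mul_comm]
  have htri : (M.submatrix Fin.castSucc Fin.succ).det = 1 := by
    rw [det_of_isLowerTriangular (M.submatrix _ _) fun i j hij ↦ hzero i j hij]
    simp [hsuper]
  rw [← h, hcol, det_succ_column_zero, Fin.sum_univ_castSucc,
    sum_eq_zero fun i _ ↦ by simp [Fin.castSucc_ne_last], zero_add, updateCol_self,
    Pi.single_eq_same, ← Fin.succAbove_zero, submatrix_updateCol_succAbove, Fin.succAbove_zero,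
    Fin.succAbove_last, htri, mul_one, Fin.val_last]

def fussMatrix (p N : ℕ) : Matrix (Fin N) (Fin N) ℤ :=
  of fun i j ↦ if (j : ℕ) ≤ i + 1 then ((p * j + 1).choose (i + 1 - j) : ℤ) else 0

theorem fussMatrix_mulVec (p N : ℕ) :
    fussMatrix p (N + 1) *ᵥ (fun j ↦ (-1) ^ (j : ℕ) * fussCatalan (p + 1) j) =
      Pi.single (Fin.last N) ((-1) ^ N * fussCatalan (p + 1) (N + 1)) := by
  ext i
  set g : ℕ → ℤ :=
    fun j ↦ (-1) ^ j * ((p * j + 1).choose (i + 1 - j) : ℤ) * fussCatalan (p + 1) j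
  have hkey : ∑ j ∈ range (i + 2), g j = 0 := alternating_sum_choose_mul_fussCatalan p i
  have hrow : (fussMatrix p (N + 1) *ᵥ (fun j ↦ (-1) ^ (j : ℕ) * fussCatalan (p + 1) j)) i =
      ∑ j ∈ range (min (N + 1) (i + 2)), g j := by
    have hrange : range (min (N + 1) (i + 2)) = (range (N + 1)).filter (· ≤ (i : ℕ) + 1) := by
      ext
      simp only [mem_range, mem_filter, lt_min_iff]
      omega
    rw [hrange, sum_filter, ← Fin.sum_univ_eq_sum_range]
    simp only [mulVec, dotProduct]
    refine sum_congr rfl fun j _ ↦ ?_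
    simp only [fussMatrix, of_apply, g]
    split_ifs <;> ring
  rw [hrow]
  rcases Fin.eq_castSucc_or_eq_last i with ⟨i, rfl⟩ | rfl
  · rw [min_eq_right (by simp), hkey, Pi.single_eq_of_ne (Fin.castSucc_ne_last i)]
  · rw [min_eq_left (by simp), Pi.single_eq_same]
    rw [sum_range_succ] at hkey
    simp only [Fin.val_last, tsub_self, Nat.choose_zero_right, Nat.cast_one, mul_one, g] at hkey ⊢
    linear_combination hkey

theorem det_fussMatrix (p N : ℕ) : (fussMatrix p N).det = fussCatalan (p + 1) N := by
  cases N with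
  | zero => simp [fussCatalan]
  | succ N =>
    rw [det_eq_of_mulVec_eq_single_last (fun i j hij ↦ ?_) (fun i ↦ ?_) (by simp [fussCatalan])
      (fussMatrix_mulVec p N), ← mul_assoc, ← pow_add, Even.neg_one_pow ⟨N, rfl⟩, one_mul]
    · simp [fussMatrix, not_le.mpr hij]
    · simp [fussMatrix]

theorem D_eq_det_fussMatrix (p N : ℕ) :
    D (p * N + 1) (N + 1) 0 (p + 1) = (fussMatrix p N).det := by
  rw [D, ← det_submatrix_equiv_self Fin.revPerm (fussMatrix p N)]
  generalize hm : ((N : ℤ) + 1 - 1).toNat = m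
  obtain rfl : N = m := by omega
  congr 1
  ext i j
  have hi := i.isLt
  have hj := j.isLt
  have htop : (p : ℤ) * N + 1 - max 0 ((p : ℤ) * ((j : ℕ) + 1)) =
      (p * (N - (j + 1)) + 1 : ℕ) := by
    rw [max_eq_right (by positivity)]
    push_cast [Nat.cast_sub hj]
    ring
  simp only [of_apply, submatrix_apply, Fin.revPerm_apply, fussMatrix, Fin.val_rev, ichoose,
    add_sub_cancel_right, htop, Int.toNat_natCast]
  split_ifs <;> first | omega | congr 2; omega

theorem ichoose_natCast (a b : ℕ) : ichoose a b = a.choose b := by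
  simp [ichoose]

theorem det_eq_fussCatalan (n k : ℤ) (hn : 1 ≤ n) (hk : 2 ≤ k) :
    (D ((k - 1) * n + 1) (n + 1) 0 k : ℚ) =
      1 / (((k : ℚ) - 1) * (n : ℚ) + 1) * (ichoose (k * n) n : ℚ) := by
  lift n to ℕ using by omega
  obtain ⟨p, rfl⟩ : ∃ p : ℕ, k = p + 1 := ⟨(k - 1).toNat, by omega⟩
  rw [add_sub_cancel_right, D_eq_det_fussMatrix, det_fussMatrix,
    show ((p : ℤ) + 1) * n = ((p + 1) * n : ℕ) by push_cast; ring, ichoose_natCast,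
    ← mul_fussCatalan]
  push_cast
  rw [add_sub_cancel_right]
  field_simp
end
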